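/- Suppose the grand-coalition optimal capacity C*_N ≥ 0 satisfies P(x_N ≤ C*_N) = γ and P(x_N ≥ C*_N) = π_s/π_δ. Then the expected-cost allocation ζ is budget balanced: Σ_{i∈N} ζ_i = Φ(x_N), the minimal expected daily storage cost of the grand coalition. -/

import Mathlib

open MeasureTheory Finset

/-- Expected daily storage cost for demand `Z` and capacity `C`:
`G(Z, C) = πs·C + πh·E[(Z − C)⁺] + πl·E[min(C, Z)]`. -/
noncomputable def expCost {Ω : Type*} [MeasurableSpace Ω] (μ : Measure Ω)
    (πh πl πs : ℝ) (Z : Ω → ℝ) (C : ℝ) : ℝ :=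
  πs * C + πh * ∫ ω, max (Z ω - C) 0 ∂μ + πl * ∫ ω, min C (Z ω) ∂μ

/-- Minimal expected storage cost: `Φ(Z) = inf_{C ≥ 0} G(Z, C)`. -/
noncomputable def minExpCost {Ω : Type*} [MeasurableSpace Ω] (μ : Measure Ω)
    (πh πl πs : ℝ) (Z : Ω → ℝ) : ℝ :=
  sInf ((fun C => expCost μ πh πl πs Z C) '' Set.Ici (0 : ℝ))

/-- Allocation 2: `ζ_i = πl·E[x_i] + πs·E[x_i ∣ x_N ≥ C*_N]`, where
`E[x_i ∣ x_N ≥ C*_N] = E[x_i·1{x_N ≥ C*_N}]/P(x_N ≥ C*_N)`. -/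
noncomputable def zetaAlloc {Ω ι : Type*} [MeasurableSpace Ω] [Fintype ι]
    (μ : Measure Ω) (πl πs : ℝ) (x : ι → Ω → ℝ) (CstarN : ℝ) (i : ι) : ℝ :=
  πl * ∫ ω, x i ω ∂μ
    + πs * ((∫ ω in {ω | CstarN ≤ ∑ j, x j ω}, x i ω ∂μ)
        / (μ {ω | CstarN ≤ ∑ j, x j ω}).toReal)

/-- Rewriting `expCost` via `min C Z = Z - (Z-C)⁺`. -/
lemma expCost_eq {Ω : Type*} [MeasurableSpace Ω] (μ : Measure Ω)
    [IsProbabilityMeasure μ] (πh πl πs : ℝ) (Z : Ω → ℝ)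
    (hZ : Integrable Z μ) (C : ℝ) :
    expCost μ πh πl πs Z C
      = πl * ∫ ω, Z ω ∂μ + πs * C + (πh - πl) * ∫ ω, max (Z ω - C) 0 ∂μ := by
  have hmaxint : Integrable (fun ω => max (Z ω - C) 0) μ :=
    (hZ.sub (integrable_const C)).pos_part
  have hmin : ∀ ω, min C (Z ω) = Z ω - max (Z ω - C) 0 := by
    intro ω
    rcases le_total C (Z ω) with h | h
    · rw [min_eq_left h, max_eq_left (by linarith)]; ring
    · rw [min_eq_right h, max_eq_right (by linarith)]; ring
  have : ∫ ω, min C (Z ω) ∂μ = ∫ ω, Z ω ∂μ - ∫ ω, max (Z ω - C) 0 ∂μ := by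
    rw [← integral_sub hZ hmaxint]
    exact integral_congr_ae (Filter.Eventually.of_forall fun ω => hmin ω)
  rw [expCost, this]; ring

/-- if the grand-coalition optimal capacity `C*_N ≥ 0` satisfies
`P(x_N ≤ C*_N) = γ` and `P(x_N ≥ C*_N) = πs/π_δ`, then the allocation `ζ` is
budget balanced: `Σ_{i∈N} ζ_i = Φ(x_N)`. -/
theorem zetaAlloc_budget_balanced
    {Ω ι : Type*} [MeasurableSpace Ω] [Fintype ι]
    (μ : Measure Ω) [IsProbabilityMeasure μ]
    (πh πl πs : ℝ) (hprices : πl < πh) (hπl : 0 ≤ πl)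
    (hπs0 : 0 < πs) (hπs1 : πs < πh - πl)
    (x : ι → Ω → ℝ) (hxint : ∀ i, Integrable (x i) μ) (hx0 : ∀ i ω, 0 ≤ x i ω)
    (CstarN : ℝ) (hCstarN : 0 ≤ CstarN)
    (hquantile : μ {ω | (∑ i, x i ω) ≤ CstarN}
      = ENNReal.ofReal ((πh - πl - πs) / (πh - πl)))
    (htail : μ {ω | CstarN ≤ ∑ i, x i ω} = ENNReal.ofReal (πs / (πh - πl))) :
    ∑ i, zetaAlloc μ πl πs x CstarN i =
      minExpCost μ πh πl πs (fun ω => ∑ i, x i ω) := by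
  set Z : Ω → ℝ := fun ω => ∑ i, x i ω with hZdef
  set A : Set Ω := {ω | CstarN ≤ Z ω} with hAdef
  set δ : ℝ := πh - πl with hδdef
  have hδ0 : 0 < δ := by linarith
  have hZint : Integrable Z μ := integrable_finset_sum _ fun i _ => hxint i
  -- a measurable version of A
  have hAnm : NullMeasurableSet A μ := by
    have : A = Z ⁻¹' Set.Ici CstarN := rfl
    rw [this]
    exact hZint.aemeasurable.nullMeasurable measurableSet_Ici
  set T : Set Ω := MeasureTheory.toMeasurable μ A with hTdef
  have hTmeas : MeasurableSet T := measurableSet_toMeasurable μ A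
  have hTA : T =ᵐ[μ] A := hAnm.toMeasurable_ae_eq
  have hμTA : μ T = μ A := measure_congr hTA
  have hμA : μ A = ENNReal.ofReal (πs / δ) := htail
  have hpos : 0 < πs / δ := div_pos hπs0 hδ0
  have hμAreal : (μ A).toReal = πs / δ := by
    rw [hμA, ENNReal.toReal_ofReal hpos.le]
  have hμTreal : (μ T).toReal = πs / δ := by rw [hμTA, hμAreal]
  -- key identity : ∫ (Z - C*)⁺ = ∫_T Z - C* * μ T
  have hindic : ∀ ω, max (Z ω - CstarN) 0 = A.indicator (fun ω => Z ω - CstarN) ω := by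
    intro ω
    by_cases h : ω ∈ A
    · rw [Set.indicator_of_mem h, max_eq_left (by simpa [hAdef, sub_nonneg] using h)]
    · have : Z ω < CstarN := by simpa [hAdef] using h
      rw [Set.indicator_of_notMem h, max_eq_right (by linarith)]
  have hkey : ∫ ω, max (Z ω - CstarN) 0 ∂μ
      = (∫ ω in T, Z ω ∂μ) - CstarN * (πs / δ) := by
    have h1 : ∫ ω, max (Z ω - CstarN) 0 ∂μ
        = ∫ ω, T.indicator (fun ω => Z ω - CstarN) ω ∂μ := by
      refine integral_congr_ae ?_
      have := indicator_ae_eq_of_ae_eq_set (f := fun ω => Z ω - CstarN) hTA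
      filter_upwards [this] with ω hω
      rw [hindic ω, ← hω]
    rw [h1, integral_indicator hTmeas,
      integral_sub hZint.integrableOn (integrableOn_const (measure_ne_top μ T)),
      setIntegral_const, smul_eq_mul, measureReal_def, hμTreal]
    ring
  -- the sum of allocations
  have hsum : ∑ i, zetaAlloc μ πl πs x CstarN i
      = πl * ∫ ω, Z ω ∂μ + δ * ∫ ω in T, Z ω ∂μ := by
    have h1 : ∀ i : ι, (∫ ω in {ω | CstarN ≤ ∑ j, x j ω}, x i ω ∂μ)
        = ∫ ω in T, x i ω ∂μ :=
      fun i => (setIntegral_congr_set (f := x i) (μ := μ) hTA).symm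
    have e1 : (μ {ω | CstarN ≤ ∑ j, x j ω}).toReal = πs / δ := hμAreal
    show _ = πl * ∫ ω, ∑ i, x i ω ∂μ + δ * ∫ ω in T, ∑ i, x i ω ∂μ
    simp only [zetaAlloc, e1, h1]
    rw [Finset.sum_add_distrib, ← Finset.mul_sum, ← Finset.mul_sum, ← Finset.sum_div,
      ← integral_finset_sum _ (fun i _ => hxint i),
      ← integral_finset_sum _ (fun i _ => ((hxint i).integrableOn : IntegrableOn (x i) T μ))]
    have hc : πs * ((∫ ω in T, ∑ i, x i ω ∂μ) / (πs / δ))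
        = δ * ∫ ω in T, ∑ i, x i ω ∂μ := by
      rw [div_div_eq_mul_div, mul_comm πs, div_mul_cancel₀ _ (ne_of_gt hπs0)]
      ring
    rw [hc]
  -- the optimal cost at CstarN
  have hopt : expCost μ πh πl πs Z CstarN
      = πl * ∫ ω, Z ω ∂μ + δ * ∫ ω in T, Z ω ∂μ := by
    rw [expCost_eq μ πh πl πs Z hZint, hkey, ← hδdef]
    have hc : δ * (CstarN * (πs / δ)) = CstarN * πs := by
      field_simp
    rw [mul_sub, hc]
    ring
  -- lower bound: for all C, expCost ... C ≥ expCost ... CstarN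
  have hlb : ∀ C : ℝ, expCost μ πh πl πs Z CstarN ≤ expCost μ πh πl πs Z C := by
    intro C
    rw [expCost_eq μ πh πl πs Z hZint, expCost_eq μ πh πl πs Z hZint, ← hδdef]
    have hint1 : Integrable (fun ω => max (Z ω - CstarN) 0) μ :=
      (hZint.sub (integrable_const _)).pos_part
    have hint2 : Integrable (fun ω => T.indicator (fun _ => CstarN - C) ω) μ :=
      (integrable_const (CstarN - C)).indicator hTmeas
    have hptwise : ∀ᵐ ω ∂μ, max (Z ω - CstarN) 0 + T.indicator (fun _ => CstarN - C) ω
        ≤ max (Z ω - C) 0 := by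
      have := indicator_ae_eq_of_ae_eq_set (f := fun _ : Ω => CstarN - C) hTA
      filter_upwards [this] with ω hω
      rw [hω]
      by_cases h : ω ∈ A
      · have hA' : CstarN ≤ Z ω := h
        rw [Set.indicator_of_mem h, max_eq_left (by linarith [hA'] : (0:ℝ) ≤ Z ω - CstarN)]
        have : Z ω - C ≤ max (Z ω - C) 0 := le_max_left _ _
        linarith
      · have hA' : Z ω < CstarN := by simpa [hAdef] using h
        rw [Set.indicator_of_notMem h, max_eq_right (by linarith : Z ω - CstarN ≤ 0),
          add_zero]
        exact le_max_right _ _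
    have hmono0 := integral_mono_ae (hint1.add hint2)
      ((hZint.sub (integrable_const C)).pos_part) hptwise
    have hmono : ∫ ω, max (Z ω - CstarN) 0 ∂μ + (CstarN - C) * (πs / δ)
        ≤ ∫ ω, max (Z ω - C) 0 ∂μ := by
      simp only [Pi.add_apply, Pi.sub_apply] at hmono0
      rwa [integral_add hint1 hint2, integral_indicator hTmeas, setIntegral_const,
        smul_eq_mul, measureReal_def, hμTreal, mul_comm] at hmono0
    have h2 : δ * ∫ ω, max (Z ω - CstarN) 0 ∂μ + (CstarN - C) * πs
        ≤ δ * ∫ ω, max (Z ω - C) 0 ∂μ := by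
      calc δ * ∫ ω, max (Z ω - CstarN) 0 ∂μ + (CstarN - C) * πs
          = δ * (∫ ω, max (Z ω - CstarN) 0 ∂μ + (CstarN - C) * (πs / δ)) := by
            field_simp
        _ ≤ δ * ∫ ω, max (Z ω - C) 0 ∂μ := mul_le_mul_of_nonneg_left hmono hδ0.le
    linarith
  -- conclude: minExpCost = expCost at CstarN
  have hmin : minExpCost μ πh πl πs Z = expCost μ πh πl πs Z CstarN := by
    apply le_antisymm
    · exact csInf_le ⟨expCost μ πh πl πs Z CstarN, fun y ⟨C, _, hC⟩ => hC ▸ hlb C⟩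
        ⟨CstarN, hCstarN, rfl⟩
    · exact le_csInf ⟨_, ⟨0, Set.self_mem_Ici, rfl⟩⟩ fun y ⟨C, _, hC⟩ => hC ▸ hlb C
  calc ∑ i, zetaAlloc μ πl πs x CstarN i
      = πl * ∫ ω, Z ω ∂μ + δ * ∫ ω in T, Z ω ∂μ := hsum
    _ = expCost μ πh πl πs Z CstarN := hopt.symm
    _ = minExpCost μ πh πl πs Z := hmin.symm
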